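/- arXiv:2511.19989 — 2 statements merged into one kernel-verified Lean document; each statement's English description precedes it below -/
import Mathlib

section
/- Let X be a p×p real symmetric positive definite matrix with ‖X − I‖ ≤ 1/2 in Frobenius norm, and let ε = ‖X − I‖. Then the (unique symmetric positive definite) square root of X satisfies X^{1/2} = I + (1/2)(X − I) + R, where R is symmetric and ‖R‖ ≤ 2ε². -/
open Matrix
/-- The Frobenius norm of a real `p × p` matrix. -/
noncomputable def frob {p : ℕ} (A : Matrix (Fin p) (Fin p) ℝ) : ℝ :=
  Real.sqrt (∑ i, ∑ j, (A i j) ^ 2)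

lemma frob_nonneg {p : ℕ} (A : Matrix (Fin p) (Fin p) ℝ) : 0 ≤ frob A := Real.sqrt_nonneg _

lemma frob_sq {p : ℕ} (A : Matrix (Fin p) (Fin p) ℝ) :
    frob A ^ 2 = ∑ i, ∑ j, (A i j) ^ 2 := by
  apply Real.sq_sqrt
  positivity

lemma frob_sq_eq_trace {p : ℕ} (A : Matrix (Fin p) (Fin p) ℝ) :
    frob A ^ 2 = (Aᵀ * A).trace := by
  rw [frob_sq, Matrix.trace]
  simp [Matrix.mul_apply, Matrix.diag, Matrix.transpose_apply, sq]
  exact Finset.sum_comm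

lemma trace_transpose_mul_self_nonneg {p : ℕ} (M : Matrix (Fin p) (Fin p) ℝ) :
    0 ≤ (Mᵀ * M).trace := by
  rw [← frob_sq_eq_trace]; positivity

lemma trace_mul_nonneg {p : ℕ} {A B : Matrix (Fin p) (Fin p) ℝ}
    (hA : A.PosSemidef) (hB : B.PosSemidef) : 0 ≤ (A * B).trace := by
  obtain ⟨C, hC⟩ : ∃ C : Matrix (Fin p) (Fin p) ℝ, A = Cᴴ * C := by
    open scoped MatrixOrder Matrix.Norms.L2Operator in
    exact CStarAlgebra.nonneg_iff_eq_star_mul_self.mp hA.nonneg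
  obtain ⟨D, hD⟩ : ∃ D : Matrix (Fin p) (Fin p) ℝ, B = Dᴴ * D := by
    open scoped MatrixOrder Matrix.Norms.L2Operator in
    exact CStarAlgebra.nonneg_iff_eq_star_mul_self.mp hB.nonneg
  have hCt : Cᴴ = Cᵀ := by ext i j; simp [Matrix.conjTranspose_apply]
  have hDt : Dᴴ = Dᵀ := by ext i j; simp [Matrix.conjTranspose_apply]
  rw [hC, hD, hCt, hDt]
  have : (Cᵀ * C * (Dᵀ * D)).trace = ((D * Cᵀ)ᵀ * (D * Cᵀ)).trace := by
    rw [Matrix.transpose_mul, Matrix.transpose_transpose, Matrix.mul_assoc,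
      Matrix.trace_mul_comm]
    congr 1
    noncomm_ring
  rw [this]
  exact trace_transpose_mul_self_nonneg _

lemma frob_mul_le {p : ℕ} (A B : Matrix (Fin p) (Fin p) ℝ) :
    frob (A * B) ≤ frob A * frob B := by
  unfold frob
  rw [← Real.sqrt_mul (by positivity)]
  apply Real.sqrt_le_sqrt
  calc ∑ i, ∑ j, ((A * B) i j) ^ 2
      ≤ ∑ i, ∑ j, (∑ k, (A i k)^2) * (∑ k, (B k j)^2) := by
        apply Finset.sum_le_sum; intro i _
        apply Finset.sum_le_sum; intro j _
        simpa [Matrix.mul_apply] using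
          Finset.sum_mul_sq_le_sq_mul_sq Finset.univ (fun k => A i k) (fun k => B k j)
    _ = (∑ i, ∑ k, (A i k)^2) * (∑ k, ∑ j, (B k j)^2) := by
        rw [Finset.sum_mul]
        apply Finset.sum_congr rfl; intro i _
        rw [← Finset.mul_sum, Finset.sum_comm]

lemma frob_smul {p : ℕ} (c : ℝ) (A : Matrix (Fin p) (Fin p) ℝ) :
    frob (c • A) = |c| * frob A := by
  unfold frob
  rw [← Real.sqrt_sq_eq_abs, ← Real.sqrt_mul (sq_nonneg c)]
  congr 1
  simp [Finset.mul_sum, mul_pow, Matrix.smul_apply, smul_eq_mul]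

/-- If `X` is a `p × p` real symmetric positive definite matrix with `‖X - I‖ ≤ 1/2` in
Frobenius norm and `ε = ‖X - I‖`, then the unique symmetric positive definite square root
`V` of `X` satisfies `V = I + (1/2)(X - I) + R` with `R` symmetric and `‖R‖ ≤ 2 ε²`. -/
theorem sqrt_taylor_expansion {p : ℕ} (X V : Matrix (Fin p) (Fin p) ℝ)
    (hXsym : Xᵀ = X) (hXpos : X.PosDef) (hnear : frob (X - 1) ≤ 1 / 2)
    (hVsym : Vᵀ = V) (hVpos : V.PosDef) (hVsq : V * V = X) :
    ∃ R : Matrix (Fin p) (Fin p) ℝ,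
      V = 1 + (1 / 2 : ℝ) • (X - 1) + R ∧ Rᵀ = R ∧ frob R ≤ 2 * frob (X - 1) ^ 2 := by
  set W : Matrix (Fin p) (Fin p) ℝ := V - 1 with hW
  refine ⟨V - 1 - (1/2 : ℝ) • (X - 1), by abel, ?_, ?_⟩
  · rw [Matrix.transpose_sub, Matrix.transpose_sub, Matrix.transpose_smul,
      Matrix.transpose_sub, Matrix.transpose_one, hXsym, hVsym]
  · -- the remainder equals -(1/2) • W²
    have hRW : V - 1 - (1/2 : ℝ) • (X - 1) = (-(1/2) : ℝ) • (W * W) := by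
      have h1 : W * W = V * V - V - V + 1 := by simp only [hW]; noncomm_ring
      rw [h1, ← hVsq]
      module
    -- trace identity : E² = W² + W²(X + V + V)
    have hid : (X - 1) * (X - 1) = W * W + (W * W) * (X + V + V) := by
      simp only [hW]; rw [← hVsq]; noncomm_ring
    have hWpsd : (Wᵀ * W).PosSemidef := by
      have := Matrix.posSemidef_conjTranspose_mul_self W
      have ht : Wᴴ = Wᵀ := by ext i j; simp [Matrix.conjTranspose_apply]
      rwa [ht] at this
    have hBpos : (X + V + V).PosDef := (hXpos.add hVpos).add hVpos
    have hWsym : Wᵀ = W := by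
      rw [hW, Matrix.transpose_sub, Matrix.transpose_one, hVsym]
    have htr : 0 ≤ ((Wᵀ * W) * (X + V + V)).trace :=
      trace_mul_nonneg hWpsd hBpos.posSemidef
    have hEsym : (X - 1)ᵀ = X - 1 := by
      rw [Matrix.transpose_sub, Matrix.transpose_one, hXsym]
    have hsq : frob W ^ 2 ≤ frob (X - 1) ^ 2 := by
      rw [frob_sq_eq_trace, frob_sq_eq_trace, hWsym, hEsym, hid, Matrix.trace_add]
      rw [hWsym] at htr
      linarith
    have hWE : frob W ≤ frob (X - 1) :=
      (pow_le_pow_iff_left₀ (frob_nonneg W) (frob_nonneg _) two_ne_zero).mp hsq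
    calc frob (V - 1 - (1/2 : ℝ) • (X - 1)) = (1/2) * frob (W * W) := by
          rw [hRW, frob_smul]; norm_num
      _ ≤ (1/2) * (frob W * frob W) := by
          have := frob_mul_le W W; linarith
      _ ≤ (1/2) * (frob (X - 1) * frob (X - 1)) := by
          have := mul_le_mul hWE hWE (frob_nonneg W) (frob_nonneg (X - 1)); linarith
      _ ≤ 2 * frob (X - 1) ^ 2 := by nlinarith [frob_nonneg (X - 1)]
end

section
/- Let X ~ χ²_m and define R₁ = √X − √m − (X − m)/(2√m). Then: (a) if |X − m|/m ≤ 1/2 then |R₁| ≤ 2√m((X−m)/m)²; (b) if X/m > 3/2 then |R₁| < X/(2√m); (c) if X/m < 1/2 then |R₁| ≤ √m/2. Consequently E[|R₁|] ≤ 12/√m. -/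
open MeasureTheory ProbabilityTheory

/-- The chi-squared distribution with `n` degrees of freedom. -/
noncomputable def chiSq (n : ℕ) : Measure ℝ :=
  Measure.map (fun z : Fin n → ℝ => ∑ i, (z i) ^ 2)
    (Measure.pi fun _ : Fin n => gaussianReal 0 1)

/-- The remainder `R₁ = √y - √m - (y - m)/(2√m)` in the Taylor expansion of the square
root around `m`. -/
noncomputable def R1 (m : ℕ) (y : ℝ) : ℝ :=
  Real.sqrt y - Real.sqrt m - (y - m) / (2 * Real.sqrt m)

open Real
open scoped ENNReal NNReal

private lemma gauss_repr : gaussianReal 0 1 = (volume : Measure ℝ).withDensity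
    (fun x => ((gaussianPDFReal 0 1 x).toNNReal : ℝ≥0∞)) := by
  rw [gaussianReal_of_var_ne_zero 0 one_ne_zero]; rfl

private lemma integral_gauss01 (g : ℝ → ℝ) :
    ∫ x, g x ∂(gaussianReal 0 1) = ∫ x, gaussianPDFReal 0 1 x * g x := by
  rw [gauss_repr, integral_withDensity_eq_integral_smul
      (measurable_gaussianPDFReal 0 1).real_toNNReal g]
  refine integral_congr_ae (Filter.Eventually.of_forall fun x => ?_)
  simp [NNReal.smul_def, Real.coe_toNNReal _ (gaussianPDFReal_nonneg 0 1 x)]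

private lemma pdf01 (x : ℝ) :
    gaussianPDFReal 0 1 x = (Real.sqrt (2 * π))⁻¹ * Real.exp (-x ^ 2 / 2) := by
  simp [gaussianPDFReal]

private lemma quart_le (x : ℝ) : x ^ 4 ≤ 64 * Real.exp (x ^ 2 / 4) := by
  have h := Real.add_one_le_exp (x ^ 2 / 8)
  have h2 : Real.exp (x ^ 2 / 4) = Real.exp (x ^ 2 / 8) * Real.exp (x ^ 2 / 8) := by
    rw [← Real.exp_add]; ring_nf
  nlinarith [sq_nonneg x, sq_nonneg (x ^ 2), Real.exp_pos (x ^ 2 / 8)]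

private lemma abs_pow_le {k : ℕ} (hk : k ≤ 4) (x : ℝ) : |x| ^ k ≤ 1 + x ^ 4 := by
  rcases le_total |x| 1 with h | h
  · have h1 : |x| ^ k ≤ 1 := pow_le_one₀ (abs_nonneg x) h
    nlinarith [sq_nonneg (x ^ 2)]
  · calc |x| ^ k ≤ |x| ^ 4 := pow_le_pow_right₀ h hk
      _ = x ^ 4 := by rw [← abs_pow, abs_of_nonneg (by positivity)]
      _ ≤ 1 + x ^ 4 := by linarith

private lemma integrable_pdf_mul_pow {k : ℕ} (hk : k ≤ 4) :
    Integrable (fun x : ℝ => gaussianPDFReal 0 1 x * x ^ k) volume := by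
  have hmeas : AEStronglyMeasurable (fun x : ℝ => gaussianPDFReal 0 1 x * x ^ k) volume :=
    ((measurable_gaussianPDFReal 0 1).mul (measurable_id.pow_const k)).aestronglyMeasurable
  have hint : Integrable
      (fun x : ℝ => (Real.sqrt (2 * π))⁻¹ * 65 * Real.exp (-(1/4) * x ^ 2)) volume :=
    (integrable_exp_neg_mul_sq (by norm_num)).const_mul _
  refine hint.mono' hmeas (Filter.Eventually.of_forall fun x => ?_)
  have hpdf : 0 ≤ gaussianPDFReal 0 1 x := gaussianPDFReal_nonneg 0 1 x
  have h1 : |x ^ k| ≤ 65 * Real.exp (x ^ 2 / 4) := by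
    rw [abs_pow]
    calc |x| ^ k ≤ 1 + x ^ 4 := abs_pow_le hk x
      _ ≤ 65 * Real.exp (x ^ 2 / 4) := by
          nlinarith [quart_le x, Real.one_le_exp (show (0:ℝ) ≤ x ^ 2 / 4 by positivity)]
  rw [Real.norm_eq_abs, abs_mul, abs_of_nonneg hpdf, pdf01]
  calc (Real.sqrt (2 * π))⁻¹ * Real.exp (-x ^ 2 / 2) * |x ^ k|
      ≤ (Real.sqrt (2 * π))⁻¹ * Real.exp (-x ^ 2 / 2) * (65 * Real.exp (x ^ 2 / 4)) := by
        apply mul_le_mul_of_nonneg_left h1 (by positivity)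
    _ = (Real.sqrt (2 * π))⁻¹ * 65 * (Real.exp (-x ^ 2 / 2) * Real.exp (x ^ 2 / 4)) := by ring
    _ = (Real.sqrt (2 * π))⁻¹ * 65 * Real.exp (-(1/4) * x ^ 2) := by
        rw [← Real.exp_add, show -x ^ 2 / 2 + x ^ 2 / 4 = -(1/4) * x ^ 2 by ring]

private lemma integrable_pow_gauss {k : ℕ} (hk : k ≤ 4) :
    Integrable (fun x : ℝ => x ^ k) (gaussianReal 0 1) := by
  rw [gauss_repr, integrable_withDensity_iff_integrable_smul
      (measurable_gaussianPDFReal 0 1).real_toNNReal]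
  refine (integrable_pdf_mul_pow hk).congr (Filter.Eventually.of_forall fun x => ?_)
  simp [NNReal.smul_def, Real.coe_toNNReal _ (gaussianPDFReal_nonneg 0 1 x)]

private lemma integral_Ioi_pow_exp (k : ℕ) :
    ∫ x in Set.Ioi (0:ℝ), Real.exp (-x ^ 2 / 2) * x ^ k
      = (1/2 : ℝ) ^ (-((k:ℝ) + 1) / 2) * (1/2) * Real.Gamma (((k:ℝ) + 1) / 2) := by
  rw [← integral_rpow_mul_exp_neg_mul_rpow (by norm_num : (0:ℝ) < 2)
    (lt_of_lt_of_le (by norm_num) (Nat.cast_nonneg k)) (by norm_num : (0:ℝ) < 1/2)]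
  refine setIntegral_congr_fun measurableSet_Ioi fun x hx => ?_
  rw [Real.rpow_natCast, show x ^ (2:ℝ) = x ^ (2:ℕ) by
    rw [show ((2:ℝ)) = ((2:ℕ):ℝ) by norm_num, Real.rpow_natCast]]
  rw [show -(1/2 : ℝ) * x ^ (2:ℕ) = -x ^ 2 / 2 by ring]
  ring

private lemma gamma_32 : Real.Gamma (3/2) = Real.sqrt π / 2 := by
  rw [show (3/2 : ℝ) = 1/2 + 1 by norm_num, Real.Gamma_add_one (by norm_num),
    Real.Gamma_one_half_eq]
  ring

private lemma gamma_52 : Real.Gamma (5/2) = 3/4 * Real.sqrt π := by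
  rw [show (5/2 : ℝ) = 3/2 + 1 by norm_num, Real.Gamma_add_one (by norm_num), gamma_32]
  ring

private lemma half_rpow (a : ℝ) : (1/2 : ℝ) ^ (-a) = (2:ℝ) ^ a := by
  rw [one_div, Real.inv_rpow (by norm_num : (0:ℝ) ≤ 2), ← Real.rpow_neg (by norm_num : (0:ℝ) ≤ 2),
    neg_neg]

private lemma two_rpow_32 : (2:ℝ) ^ ((3:ℝ)/2) = 2 * Real.sqrt 2 := by
  rw [show (3:ℝ)/2 = 1 + 1/2 by norm_num, Real.rpow_add (by norm_num), Real.rpow_one,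
    ← Real.sqrt_eq_rpow]

private lemma two_rpow_52 : (2:ℝ) ^ ((5:ℝ)/2) = 4 * Real.sqrt 2 := by
  rw [show (5:ℝ)/2 = 1 + (1 + 1/2) by norm_num, Real.rpow_add (by norm_num),
    Real.rpow_add (by norm_num), Real.rpow_one, ← Real.sqrt_eq_rpow]
  ring

private lemma integral_gauss_pow {k : ℕ} (hk : k ≤ 4) (hke : Even k) :
    ∫ x, x ^ k ∂(gaussianReal 0 1)
      = (Real.sqrt (2*π))⁻¹ * (2 * ((1/2 : ℝ) ^ (-((k:ℝ) + 1) / 2) * (1/2)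
          * Real.Gamma (((k:ℝ) + 1) / 2))) := by
  rw [integral_gauss01]
  calc ∫ x, gaussianPDFReal 0 1 x * x ^ k
      = ∫ x, (Real.sqrt (2*π))⁻¹ * (Real.exp (-x ^ 2 / 2) * x ^ k) := by
        refine integral_congr_ae (Filter.Eventually.of_forall fun x => ?_)
        show gaussianPDFReal 0 1 x * x ^ k = (Real.sqrt (2*π))⁻¹ * (Real.exp (-x ^ 2 / 2) * x ^ k)
        rw [pdf01]; ring
    _ = (Real.sqrt (2*π))⁻¹ * ∫ x, Real.exp (-x ^ 2 / 2) * x ^ k := by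
        rw [integral_const_mul]
    _ = (Real.sqrt (2*π))⁻¹ * (2 * ∫ x in Set.Ioi (0:ℝ), Real.exp (-x ^ 2 / 2) * x ^ k) := by
        rw [← integral_comp_abs (f := fun x => Real.exp (-x ^ 2 / 2) * x ^ k)]
        congr 1
        refine integral_congr_ae (Filter.Eventually.of_forall fun x => ?_)
        show Real.exp (-x ^ 2 / 2) * x ^ k = Real.exp (-|x| ^ 2 / 2) * |x| ^ k
        rw [sq_abs, hke.pow_abs]
    _ = _ := by rw [integral_Ioi_pow_exp]

private lemma sqrt2pi_pos : (0:ℝ) < Real.sqrt (2 * π) :=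
  Real.sqrt_pos.mpr (by positivity)

private lemma integral_gauss_sq : ∫ x, x ^ 2 ∂(gaussianReal 0 1) = 1 := by
  rw [integral_gauss_pow (by norm_num) (by decide)]
  push_cast
  rw [show -((2:ℝ) + 1)/2 = -(3/2) by norm_num, half_rpow, two_rpow_32,
    show ((2:ℝ) + 1)/2 = 3/2 by norm_num, gamma_32]
  have h := sqrt2pi_pos
  calc (Real.sqrt (2*π))⁻¹ * (2 * (2 * Real.sqrt 2 * (1/2) * (Real.sqrt π / 2)))
      = (Real.sqrt (2*π))⁻¹ * (Real.sqrt 2 * Real.sqrt π) := by ring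
    _ = 1 := by
        rw [← Real.sqrt_mul (by norm_num : (0:ℝ) ≤ 2)]
        exact inv_mul_cancel₀ (ne_of_gt h)

private lemma integral_gauss_quartic : ∫ x, x ^ 4 ∂(gaussianReal 0 1) = 3 := by
  rw [integral_gauss_pow le_rfl (by decide)]
  push_cast
  rw [show -((4:ℝ) + 1)/2 = -(5/2) by norm_num, half_rpow, two_rpow_52,
    show ((4:ℝ) + 1)/2 = 5/2 by norm_num, gamma_52]
  have h := sqrt2pi_pos
  calc (Real.sqrt (2*π))⁻¹ * (2 * (4 * Real.sqrt 2 * (1/2) * (3/4 * Real.sqrt π)))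
      = (Real.sqrt (2*π))⁻¹ * (Real.sqrt 2 * Real.sqrt π) * 3 := by ring
    _ = 3 := by
        rw [← Real.sqrt_mul (by norm_num : (0:ℝ) ≤ 2), inv_mul_cancel₀ (ne_of_gt h), one_mul]

private lemma eval_mp {m : ℕ} (i : Fin m) :
    MeasurePreserving (Function.eval i) (Measure.pi fun _ : Fin m => gaussianReal 0 1)
      (gaussianReal 0 1) := by
  refine ⟨measurable_pi_apply i, Measure.ext fun s hs => ?_⟩
  rw [Measure.map_apply (measurable_pi_apply i) hs, Set.eval_preimage, Measure.pi_pi]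
  rw [Finset.prod_eq_single i (fun j _ hj => by simp [Function.update_apply, hj])
    (by simp)]
  simp

private lemma iIndep_eval {m : ℕ} :
    iIndepFun (fun (i : Fin m) (z : Fin m → ℝ) => z i)
      (Measure.pi fun _ : Fin m => gaussianReal 0 1) := by
  rw [iIndepFun_iff_measure_inter_preimage_eq_mul]
  intro S sets hsets
  classical
  have h1 : (⋂ i ∈ S, (fun z : Fin m → ℝ => z i) ⁻¹' sets i)
      = Set.pi Set.univ (fun i => if i ∈ S then sets i else Set.univ) := by
    ext z
    simp only [Set.mem_iInter, Set.mem_preimage, Set.mem_pi, Set.mem_univ, true_implies]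
    constructor
    · intro h i
      by_cases hi : i ∈ S
      · simpa [hi] using h i hi
      · simp [hi]
    · intro h i hi
      have := h i
      simpa [hi] using this
  have h2 : ∀ i ∈ S, (Measure.pi fun _ : Fin m => gaussianReal 0 1)
      ((fun z : Fin m → ℝ => z i) ⁻¹' sets i) = gaussianReal 0 1 (sets i) := fun i hi =>
    (eval_mp i).measure_preimage (hsets i hi).nullMeasurableSet
  rw [h1, Measure.pi_pi, Finset.prod_congr rfl h2]
  simp_rw [apply_ite (gaussianReal 0 1), measure_univ]
  rw [Finset.prod_ite_mem Finset.univ S (fun j => gaussianReal 0 1 (sets j)),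
    Finset.univ_inter]

private lemma memLp_eval_sq {m : ℕ} (i : Fin m) :
    MemLp (fun z : Fin m → ℝ => (z i) ^ 2) 2 (Measure.pi fun _ : Fin m => gaussianReal 0 1) := by
  have h : MemLp (fun x : ℝ => x ^ 2) 2 (gaussianReal 0 1) := by
    have ham : AEStronglyMeasurable (fun x : ℝ => x ^ 2) (gaussianReal 0 1) :=
      (measurable_id.pow_const 2).aestronglyMeasurable
    rw [memLp_two_iff_integrable_sq ham]
    refine (integrable_pow_gauss le_rfl).congr (Filter.Eventually.of_forall fun x => ?_)
    ring
  exact h.comp_measurePreserving (eval_mp i)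

private lemma integral_eval_pow {m : ℕ} (i : Fin m) (k : ℕ) :
    ∫ z, (z i) ^ k ∂(Measure.pi fun _ : Fin m => gaussianReal 0 1)
      = ∫ x, x ^ k ∂(gaussianReal 0 1) := by
  conv_rhs => rw [← (eval_mp i).map_eq]
  have hf : AEMeasurable (Function.eval i)
      (Measure.pi fun _ : Fin m => gaussianReal 0 1) := (measurable_pi_apply i).aemeasurable
  have hg : AEStronglyMeasurable (fun x : ℝ => x ^ k)
      (Measure.map (Function.eval i) (Measure.pi fun _ : Fin m => gaussianReal 0 1)) :=
    (measurable_id.pow_const k).aestronglyMeasurable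
  rw [integral_map hf hg]

private lemma variance_eval_sq {m : ℕ} (i : Fin m) :
    variance (fun z : Fin m → ℝ => (z i) ^ 2)
      (Measure.pi fun _ : Fin m => gaussianReal 0 1) = 2 := by
  rw [variance_eq_sub (memLp_eval_sq i)]
  have h4 : ∫ z, ((fun z : Fin m → ℝ => (z i) ^ 2) ^ 2) z
      ∂(Measure.pi fun _ : Fin m => gaussianReal 0 1) = 3 := by
    calc ∫ z, ((fun z : Fin m → ℝ => (z i) ^ 2) ^ 2) z
        ∂(Measure.pi fun _ : Fin m => gaussianReal 0 1)
        = ∫ z, (z i) ^ 4 ∂(Measure.pi fun _ : Fin m => gaussianReal 0 1) := by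
          refine integral_congr_ae (Filter.Eventually.of_forall fun z => ?_)
          simp [Pi.pow_apply]; ring
      _ = 3 := by rw [integral_eval_pow i 4, integral_gauss_quartic]
  have h2 : ∫ z, (z i) ^ 2 ∂(Measure.pi fun _ : Fin m => gaussianReal 0 1) = 1 := by
    rw [integral_eval_pow i 2, integral_gauss_sq]
  rw [h4, h2]
  norm_num

private lemma integral_pi_sub_sq (m : ℕ) :
    ∫ z, ((∑ i, (z i) ^ 2 : ℝ) - (m:ℝ)) ^ 2
      ∂(Measure.pi fun _ : Fin m => gaussianReal 0 1) = 2 * m := by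
  set μ := Measure.pi fun _ : Fin m => gaussianReal 0 1 with hμ
  have hsum : (fun z : Fin m → ℝ => ∑ i, (z i) ^ 2)
      = ∑ i : Fin m, (fun z : Fin m → ℝ => (z i) ^ 2) := by
    funext z; simp
  have hS : MemLp (fun z : Fin m → ℝ => ∑ i, (z i) ^ 2) 2 μ := by
    rw [hsum]
    exact memLp_finset_sum' _ (fun i _ => memLp_eval_sq i)
  have hmean : ∫ z, (∑ i, (z i) ^ 2 : ℝ) ∂μ = m := by
    rw [integral_finset_sum _ (fun i _ => ((memLp_eval_sq i).integrable one_le_two))]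
    simp [integral_eval_pow, integral_gauss_sq]
  have hvar : variance (fun z : Fin m → ℝ => ∑ i, (z i) ^ 2) μ = 2 * m := by
    rw [hsum, IndepFun.variance_sum (fun i _ => memLp_eval_sq i)
      (fun i _ j _ hij => (iIndep_eval.comp (fun _ x => x ^ 2)
        (fun _ => measurable_id.pow_const 2)).indepFun hij)]
    simp [variance_eval_sq]
    ring
  have hveq := variance_eq_integral hS.aemeasurable
  rw [hvar, hmean] at hveq
  exact hveq.symm

private lemma measurable_sumsq (m : ℕ) :
    Measurable (fun z : Fin m → ℝ => ∑ i, (z i) ^ 2) :=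
  Finset.measurable_sum _ fun i _ => (measurable_pi_apply i).pow_const 2

private lemma integral_chiSq_sub_sq (m : ℕ) :
    ∫ y, (y - (m:ℝ)) ^ 2 ∂(chiSq m) = 2 * m := by
  have hg : AEStronglyMeasurable (fun y : ℝ => (y - (m:ℝ)) ^ 2)
      (Measure.map (fun z : Fin m → ℝ => ∑ i, (z i) ^ 2)
        (Measure.pi fun _ : Fin m => gaussianReal 0 1)) :=
    ((measurable_id.sub_const _).pow_const 2).aestronglyMeasurable
  rw [chiSq, integral_map (measurable_sumsq m).aemeasurable hg]
  exact integral_pi_sub_sq m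

private lemma integrable_chiSq_sub_sq (m : ℕ) :
    Integrable (fun y : ℝ => (y - (m:ℝ)) ^ 2) (chiSq m) := by
  have hg : AEStronglyMeasurable (fun y : ℝ => (y - (m:ℝ)) ^ 2)
      (Measure.map (fun z : Fin m → ℝ => ∑ i, (z i) ^ 2)
        (Measure.pi fun _ : Fin m => gaussianReal 0 1)) :=
    ((measurable_id.sub_const _).pow_const 2).aestronglyMeasurable
  rw [chiSq, integrable_map_measure hg (measurable_sumsq m).aemeasurable]
  have hS : MemLp (fun z : Fin m → ℝ => (∑ i, (z i) ^ 2 : ℝ) - m) 2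
      (Measure.pi fun _ : Fin m => gaussianReal 0 1) := by
    have hsum : (fun z : Fin m → ℝ => ∑ i, (z i) ^ 2)
        = ∑ i : Fin m, (fun z : Fin m → ℝ => (z i) ^ 2) := by funext z; simp
    exact (hsum ▸ memLp_finset_sum' _ (fun i _ => memLp_eval_sq i)).sub (memLp_const _)
  exact hS.integrable_sq

private lemma chiSq_ae_nonneg (m : ℕ) : ∀ᵐ y ∂(chiSq m), 0 ≤ y := by
  rw [chiSq]
  refine (ae_map_iff (measurable_sumsq m).aemeasurable measurableSet_Ici).2 ?_
  exact Filter.Eventually.of_forall fun z => by positivity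

private lemma R1_eq {m : ℕ} (hm : 1 ≤ m) {y : ℝ} (hy : 0 ≤ y) :
    R1 m y = -(Real.sqrt y - Real.sqrt m) ^ 2 / (2 * Real.sqrt m) := by
  have hm' : (0:ℝ) < m := by exact_mod_cast hm
  have hb : 0 < Real.sqrt m := Real.sqrt_pos.mpr hm'
  have hy2 : Real.sqrt y ^ 2 = y := Real.sq_sqrt hy
  have hm2 : Real.sqrt (m:ℝ) ^ 2 = (m:ℝ) := Real.sq_sqrt hm'.le
  rw [R1, ← hy2, ← hm2]
  field_simp
  rw [hy2, hm2]
  linear_combination hy2 - hm2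

private lemma abs_R1_eq {m : ℕ} (hm : 1 ≤ m) {y : ℝ} (hy : 0 ≤ y) :
    |R1 m y| = (Real.sqrt y - Real.sqrt m) ^ 2 / (2 * Real.sqrt m) := by
  have hm' : (0:ℝ) < m := by exact_mod_cast hm
  have hb : 0 < Real.sqrt m := Real.sqrt_pos.mpr hm'
  rw [R1_eq hm hy, abs_div, abs_neg, abs_of_nonneg (sq_nonneg _),
    abs_of_nonneg (by positivity)]

private lemma abs_R1_le {m : ℕ} (hm : 1 ≤ m) {y : ℝ} (hy : 0 ≤ y) :
    |R1 m y| ≤ (y - m) ^ 2 / (2 * m * Real.sqrt m) := by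
  have hm' : (0:ℝ) < m := by exact_mod_cast hm
  have hb : 0 < Real.sqrt m := Real.sqrt_pos.mpr hm'
  have ha : 0 ≤ Real.sqrt y := Real.sqrt_nonneg y
  have hy2 : Real.sqrt y ^ 2 = y := Real.sq_sqrt hy
  have hm2 : Real.sqrt (m:ℝ) ^ 2 = (m:ℝ) := Real.sq_sqrt hm'.le
  rw [abs_R1_eq hm hy, div_le_div_iff₀ (by positivity) (by positivity)]
  set a := Real.sqrt y
  set b := Real.sqrt (m:ℝ)
  rw [← hy2, ← hm2]
  have key : (a - b) ^ 2 * b ^ 2 ≤ (a - b) ^ 2 * (a + b) ^ 2 := by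
    apply mul_le_mul_of_nonneg_left _ (sq_nonneg _)
    nlinarith
  nlinarith [sq_nonneg (a - b), sq_nonneg (a + b)]


/-- Pointwise bounds on the remainder `R₁` for `X ~ χ²_m` (`m ≥ 1`):
(a) if `|y - m|/m ≤ 1/2` then `|R₁| ≤ 2√m((y - m)/m)²`;
(b) if `y/m > 3/2` then `|R₁| < y/(2√m)`;
(c) if `y/m < 1/2` then `|R₁| ≤ √m/2`.
Consequently `E[|R₁(X)|] ≤ 12/√m`. -/
theorem R1_bounds (m : ℕ) (hm : 1 ≤ m) :
    (∀ y : ℝ, 0 ≤ y → |y - m| / m ≤ 1 / 2 →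
        |R1 m y| ≤ 2 * Real.sqrt m * ((y - m) / m) ^ 2) ∧
    (∀ y : ℝ, 0 ≤ y → 3 / 2 < y / m → |R1 m y| < y / (2 * Real.sqrt m)) ∧
    (∀ y : ℝ, 0 ≤ y → y / m < 1 / 2 → |R1 m y| ≤ Real.sqrt m / 2) ∧
    (∫ y, |R1 m y| ∂(chiSq m)) ≤ 12 / Real.sqrt m := by
  have hm' : (0:ℝ) < m := by exact_mod_cast hm
  have hb : 0 < Real.sqrt m := Real.sqrt_pos.mpr hm'
  have hm2 : Real.sqrt (m:ℝ) ^ 2 = (m:ℝ) := Real.sq_sqrt hm'.le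
  refine ⟨?_, ?_, ?_, ?_⟩
  · -- part (a)
    intro y hy _
    refine (abs_R1_le hm hy).trans ?_
    rw [div_pow, ← mul_div_assoc, div_le_div_iff₀ (by positivity) (by positivity)]
    nlinarith [sq_nonneg ((y - (m:ℝ)) * (m:ℝ)), sq_nonneg (y - (m:ℝ)), hm2, hm']
  · -- part (b)
    intro y hy hy'
    have hylt : (3:ℝ)/2 * m < y := by
      rw [lt_div_iff₀ hm'] at hy'
      linarith
    have ha : 0 ≤ Real.sqrt y := Real.sqrt_nonneg y
    have hy2 : Real.sqrt y ^ 2 = y := Real.sq_sqrt hy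
    rw [abs_R1_eq hm hy, div_lt_div_iff₀ (by positivity) (by positivity)]
    set a := Real.sqrt y
    set b := Real.sqrt (m:ℝ)
    -- (a - b)^2 * (2 * b) < a^2 * (2 * b), since b^2 < 2 a b
    have hkey : (a - b) ^ 2 < a ^ 2 := by nlinarith
    nlinarith
  · -- part (c)
    intro y hy hy'
    have hylt : y < (m:ℝ) / 2 := by
      rw [div_lt_iff₀ hm'] at hy'
      linarith
    have ha : 0 ≤ Real.sqrt y := Real.sqrt_nonneg y
    have hy2 : Real.sqrt y ^ 2 = y := Real.sq_sqrt hy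
    rw [abs_R1_eq hm hy, div_le_div_iff₀ (by positivity) (by positivity)]
    set a := Real.sqrt y
    set b := Real.sqrt (m:ℝ)
    have hab : a ≤ b := by nlinarith
    nlinarith
  · -- integral bound
    have hae : ∀ᵐ y ∂(chiSq m), |R1 m y| ≤ (y - m) ^ 2 / (2 * m * Real.sqrt m) :=
      (chiSq_ae_nonneg m).mono fun y hy => abs_R1_le hm hy
    have hInt : Integrable (fun y : ℝ => (y - m) ^ 2 / (2 * m * Real.sqrt m)) (chiSq m) :=
      (integrable_chiSq_sub_sq m).div_const _
    calc ∫ y, |R1 m y| ∂(chiSq m)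
        ≤ ∫ y, (y - m) ^ 2 / (2 * m * Real.sqrt m) ∂(chiSq m) :=
          integral_mono_of_nonneg (Filter.Eventually.of_forall fun y => abs_nonneg _) hInt hae
      _ = (∫ y, (y - m) ^ 2 ∂(chiSq m)) / (2 * m * Real.sqrt m) := integral_div _ _
      _ = (2 * m) / (2 * m * Real.sqrt m) := by rw [integral_chiSq_sub_sq]
      _ = 1 / Real.sqrt m := by
          rw [div_mul_eq_div_div, div_self (by positivity : (0:ℝ) < 2 * (m:ℝ)).ne']
      _ ≤ 12 / Real.sqrt m := by gcongr <;> norm_num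
end
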